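/- Let M be a torsion-free right R-module and let m ∈ M with m ≠ 0. Then the cyclic submodule mR is a prime submodule of M if and only if mR is an almost prime submodule of M. -/

import Mathlib

open MulOpposite Submodule

variable {R : Type*} [Ring R] {M : Type*} [AddCommGroup M] [Module Rᵐᵒᵖ M]

/-- The product `Y·A` of a set of elements of a right `R`-module `M` and a set of ring
elements: the submodule of all finite sums `Σ yᵢ·aᵢ` with `yᵢ ∈ Y`, `aᵢ ∈ A`. -/
def sProd (Y : Set M) (A : Set R) : Submodule Rᵐᵒᵖ M :=
  Submodule.span Rᵐᵒᵖ {z | ∃ y ∈ Y, ∃ a ∈ A, z = op a • y}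

/-- `(X :_R N) = {r : R | N·r ⊆ X}`. -/
def colR (X : Set M) (N : Set M) : Set R := {r | ∀ m ∈ N, op r • m ∈ X}

/-- `(X :_M A) = {m : M | m·A ⊆ X}`. -/
def colM (X : Set M) (A : Set R) : Set M := {m | ∀ r ∈ A, op r • m ∈ X}

/-- A function `φ : S(M) → S(M) ∪ {∅}` (values are either `∅` or submodules) with
`φ(X) ⊆ X` for every submodule `X`. -/
def GoodPhi (φ : Submodule Rᵐᵒᵖ M → Set M) : Prop :=
  ∀ N : Submodule Rᵐᵒᵖ M, φ N ⊆ N ∧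
    (φ N = (∅ : Set M) ∨ ∃ P : Submodule Rᵐᵒᵖ M, φ N = (P : Set M))

/-- `X` is a φ-prime submodule of the right `R`-module `M`. -/
def PhiPrime (φ : Submodule Rᵐᵒᵖ M → Set M) (X : Submodule Rᵐᵒᵖ M) : Prop :=
  X ≠ ⊤ ∧ ∀ (Y : Submodule Rᵐᵒᵖ M) (I : TwoSidedIdeal R),
    (sProd (Y : Set M) (I : Set R) : Set M) ⊆ (X : Set M) →
    ¬((sProd (Y : Set M) (I : Set R) : Set M) ⊆ φ X) →
    (Y : Set M) ⊆ (X : Set M) ∨ (I : Set R) ⊆ colR (X : Set M) Set.univ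

/-- `X` is a prime submodule of the right `R`-module `M`. -/
def PrimeSub (X : Submodule Rᵐᵒᵖ M) : Prop :=
  X ≠ ⊤ ∧ ∀ (Y : Submodule Rᵐᵒᵖ M) (I : TwoSidedIdeal R),
    (sProd (Y : Set M) (I : Set R) : Set M) ⊆ (X : Set M) →
    (Y : Set M) ⊆ (X : Set M) ∨ (I : Set R) ⊆ colR (X : Set M) Set.univ

/-- `X` is a weakly prime submodule of the right `R`-module `M`. -/
def WeaklyPrime (X : Submodule Rᵐᵒᵖ M) : Prop :=
  X ≠ ⊤ ∧ ∀ (Y : Submodule Rᵐᵒᵖ M) (I : TwoSidedIdeal R),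
    sProd (Y : Set M) (I : Set R) ≠ ⊥ →
    (sProd (Y : Set M) (I : Set R) : Set M) ⊆ (X : Set M) →
    (Y : Set M) ⊆ (X : Set M) ∨ (I : Set R) ⊆ colR (X : Set M) Set.univ

/-- `X` is an almost prime submodule of the right `R`-module `M`. -/
def AlmostPrime (X : Submodule Rᵐᵒᵖ M) : Prop :=
  X ≠ ⊤ ∧ ∀ (Y : Submodule Rᵐᵒᵖ M) (I : TwoSidedIdeal R),
    (sProd (Y : Set M) (I : Set R) : Set M) ⊆ (X : Set M) →
    ¬((sProd (Y : Set M) (I : Set R) : Set M) ⊆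
        (sProd (X : Set M) ((colR (X : Set M) Set.univ : Set R)) : Set M)) →
    (Y : Set M) ⊆ (X : Set M) ∨ (I : Set R) ⊆ colR (X : Set M) Set.univ

/-- `powAct X n = X (X :_R M)ⁿ`. -/
def powAct (X : Submodule Rᵐᵒᵖ M) : ℕ → Submodule Rᵐᵒᵖ M
  | 0 => X
  | n + 1 => sProd (powAct X n : Set M) ((colR (X : Set M) Set.univ : Set R))

/-- The product of two sets of ring elements: all finite sums `Σ aᵢbᵢ`, `aᵢ ∈ A`, `bᵢ ∈ B`. -/
def idMul (A B : Set R) : Set R :=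
  (AddSubmonoid.closure {x | ∃ a ∈ A, ∃ b ∈ B, x = a * b} : AddSubmonoid R)

/-- A prime (two-sided) ideal of a possibly noncommutative ring. -/
def TIPrime (P : TwoSidedIdeal R) : Prop :=
  (P : Set R) ≠ Set.univ ∧ ∀ I J : TwoSidedIdeal R,
    idMul (I : Set R) (J : Set R) ⊆ (P : Set R) →
    (I : Set R) ⊆ (P : Set R) ∨ (J : Set R) ⊆ (P : Set R)

/-- The radical `√A`: the intersection of all prime two-sided ideals containing `A`. -/
def radSet (A : Set R) : Set R :=
  {x | ∀ P : TwoSidedIdeal R, TIPrime P → A ⊆ (P : Set R) → x ∈ (P : Set R)}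

/-- A ψ-prime two-sided ideal of a possibly noncommutative ring. -/
def PsiPrime (ψ : TwoSidedIdeal R → Set R) (A : TwoSidedIdeal R) : Prop :=
  (A : Set R) ≠ Set.univ ∧ ∀ I J : TwoSidedIdeal R,
    idMul (I : Set R) (J : Set R) ⊆ (A : Set R) →
    ¬(idMul (I : Set R) (J : Set R) ⊆ ψ A) →
    (I : Set R) ⊆ (A : Set R) ∨ (J : Set R) ⊆ (A : Set R)

/-- The induced function `φ_Y` on submodules of `M/Y`: `φ_Y(X/Y) = (φ(X)+Y)/Y`. -/
def phiQuot (φ : Submodule Rᵐᵒᵖ M → Set M) (Y : Submodule Rᵐᵒᵖ M) :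
    Submodule Rᵐᵒᵖ (M ⧸ Y) → Set (M ⧸ Y) :=
  fun Q => Y.mkQ '' (φ (Q.comap Y.mkQ))

/-- The colon `(X :_R Y)` of two submodules, as a two-sided ideal of `R`. -/
def colTI (X Y : Submodule Rᵐᵒᵖ M) : TwoSidedIdeal R :=
  TwoSidedIdeal.mk' (colR (X : Set M) (Y : Set M))
    (by intro m hm; simp)
    (by intro x y hx hy m hm
        rw [op_add, add_smul]
        exact X.add_mem (hx m hm) (hy m hm))
    (by intro x hx m hm
        rw [op_neg, neg_smul]
        exact X.neg_mem (hx m hm))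
    (by intro x y hy m hm
        rw [op_mul, mul_smul]
        exact hy _ (Y.smul_mem (op x) hm))
    (by intro x y hx m hm
        rw [op_mul, mul_smul]
        exact X.smul_mem (op y) (hx m hm))

/-- The colon `(X :_M I)` as a submodule of `M`, for a two-sided ideal `I`. -/
def colMS (X : Submodule Rᵐᵒᵖ M) (I : TwoSidedIdeal R) : Submodule Rᵐᵒᵖ M where
  carrier := colM (X : Set M) (I : Set R)
  add_mem' := by
    intro a b ha hb r hr
    rw [smul_add]
    exact X.add_mem (ha r hr) (hb r hr)
  zero_mem' := by
    intro r hr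
    rw [smul_zero]
    exact X.zero_mem
  smul_mem' := by
    intro c m hm r hr
    rw [← mul_smul, show op r * c = op (unop c * r) from by rw [op_mul, op_unop]]
    exact hm _ (I.mul_mem_left _ _ hr)

/-- `M` is a multiplication right `R`-module: every submodule `X` equals `M(X :_R M)`. -/
def IsMultiplication (R : Type*) [Ring R] (M : Type*) [AddCommGroup M]
    [Module Rᵐᵒᵖ M] : Prop :=
  ∀ X : Submodule Rᵐᵒᵖ M, X = sProd (Set.univ : Set M) ((colR (X : Set M) Set.univ : Set R))

/-- The product `XY = M(X :_R M)(Y :_R M)` of two submodules of a multiplication module. -/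
def mprod (X Y : Submodule Rᵐᵒᵖ M) : Submodule Rᵐᵒᵖ M :=
  sProd ((sProd (Set.univ : Set M) ((colR (X : Set M) Set.univ : Set R)) : Submodule Rᵐᵒᵖ M) : Set M)
    ((colR (Y : Set M) Set.univ : Set R))

/-- A φ-m-system in a right `R`-module `M`. -/
def PhiMSystem (φ : Submodule Rᵐᵒᵖ M → Set M) (S : Set M) : Prop :=
  S.Nonempty ∧ ∀ (Y₁ Y₂ : Submodule Rᵐᵒᵖ M) (I : TwoSidedIdeal R),
    ((Y₁ ⊔ Y₂ : Submodule Rᵐᵒᵖ M) : Set M) ∩ S ≠ ∅ →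
    ((Y₁ ⊔ sProd (Set.univ : Set M) (I : Set R) : Submodule Rᵐᵒᵖ M) : Set M) ∩ S ≠ ∅ →
    ¬((sProd (Y₂ : Set M) (I : Set R) : Set M) ⊆ φ (Submodule.span Rᵐᵒᵖ Sᶜ)) →
    ((Y₁ ⊔ sProd (Y₂ : Set M) (I : Set R) : Submodule Rᵐᵒᵖ M) : Set M) ∩ S ≠ ∅

/-! Let `X = mR` and `YI ⊆ X`. If `XI ⊄ X(X :_R M)`, almost primeness applies to `Y + X`: its
product with `I` still lies in `X` but contains `XI`, hence escapes `X(X :_R M)`. Otherwise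
`mI ⊆ m(X :_R M)`, and since `m` has zero annihilator, `mi = mb` forces `i = b`, so
`I ⊆ (X :_R M)`. -/

theorem sProd_le_iff {Y : Set M} {A : Set R} {N : Submodule Rᵐᵒᵖ M} :
    sProd Y A ≤ N ↔ ∀ y ∈ Y, ∀ a ∈ A, op a • y ∈ N := by
  rw [sProd, span_le]
  constructor
  · intro h y hy a ha
    exact h ⟨y, hy, a, ha, rfl⟩
  · rintro h _ ⟨y, hy, a, ha, rfl⟩
    exact h y hy a ha

theorem sProd_mono_left {Y Y' : Set M} (h : Y ⊆ Y') (A : Set R) : sProd Y A ≤ sProd Y' A :=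
  span_mono fun _ ⟨y, hy, a, ha, hz⟩ => ⟨y, h hy, a, ha, hz⟩

theorem sProd_sup_le {X Y : Submodule Rᵐᵒᵖ M} {A : Set R} (h : sProd (Y : Set M) A ≤ X) :
    sProd ((Y ⊔ X : Submodule Rᵐᵒᵖ M) : Set M) A ≤ X := by
  rw [sProd_le_iff] at h ⊢
  intro z hz a ha
  obtain ⟨y, hy, x, hx, rfl⟩ := mem_sup.1 hz
  rw [smul_add]
  exact X.add_mem (h y hy a ha) (X.smul_mem _ hx)

theorem sProd_span_singleton (m : M) (J : TwoSidedIdeal R) :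
    sProd (span Rᵐᵒᵖ {m} : Set M) (J : Set R) =
      Submodule.map (LinearMap.toSpanSingleton Rᵐᵒᵖ M m) J.asIdealOpposite := by
  apply le_antisymm
  · refine sProd_le_iff.2 fun y hy a ha => ?_
    obtain ⟨c, rfl⟩ := mem_span_singleton.1 hy
    refine ⟨op a * c, ?_, by simp [mul_smul]⟩
    rw [SetLike.mem_coe, TwoSidedIdeal.mem_asIdealOpposite, unop_mul, unop_op]
    exact J.mul_mem_left _ _ ha
  · rintro _ ⟨c, hc, rfl⟩
    exact subset_span ⟨m, mem_span_singleton_self m, c.unop, TwoSidedIdeal.mem_asIdealOpposite.1 hc,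
      by simp⟩

theorem le_of_sProd_span_singleton_le {m : M} (htf : ∀ r : R, op r • m = 0 → r = 0)
    {I J : TwoSidedIdeal R}
    (h : sProd (span Rᵐᵒᵖ {m} : Set M) (I : Set R) ≤ sProd (span Rᵐᵒᵖ {m} : Set M) (J : Set R)) :
    I ≤ J := by
  intro i hi
  have him : op i • m ∈ sProd (span Rᵐᵒᵖ {m} : Set M) (J : Set R) :=
    h (subset_span ⟨m, mem_span_singleton_self m, i, hi, rfl⟩)
  rw [sProd_span_singleton] at him
  obtain ⟨c, hc, hcm⟩ := him
  have hic : i = c.unop := sub_eq_zero.1 <| htf _ <| by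
    rw [op_sub, sub_smul, op_unop, ← hcm, LinearMap.toSpanSingleton_apply, sub_self]
  exact hic ▸ TwoSidedIdeal.mem_asIdealOpposite.1 hc

theorem PrimeSub.almostPrime {X : Submodule Rᵐᵒᵖ M} (h : PrimeSub X) : AlmostPrime X :=
  ⟨h.1, fun Y I hYI _ => h.2 Y I hYI⟩

theorem AlmostPrime.of_not_sProd_subset {X Y : Submodule Rᵐᵒᵖ M} {I : TwoSidedIdeal R}
    (h : AlmostPrime X)
    (hXI : ¬(sProd (X : Set M) (I : Set R) : Set M) ⊆
      sProd (X : Set M) (colR (X : Set M) Set.univ : Set R))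
    (hYI : (sProd (Y : Set M) (I : Set R) : Set M) ⊆ X) :
    (Y : Set M) ⊆ X ∨ (I : Set R) ⊆ colR (X : Set M) Set.univ := by
  have hXI' : ¬(sProd ((Y ⊔ X : Submodule Rᵐᵒᵖ M) : Set M) (I : Set R) : Set M) ⊆
      sProd (X : Set M) (colR (X : Set M) Set.univ : Set R) := fun hle =>
    hXI ((sProd_mono_left (SetLike.coe_subset_coe.2 le_sup_right) _).trans hle)
  exact (h.2 (Y ⊔ X) I (sProd_sup_le hYI) hXI').imp_left
    fun hY => (SetLike.coe_subset_coe.2 le_sup_left).trans hY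

/-- Let `M` be a torsion-free right `R`-module and `m ≠ 0`.
Then `mR` is a prime submodule of `M` iff `mR` is an almost prime submodule of `M`. -/
theorem stmt_9 (htf : ∀ m : M, m ≠ 0 → ∀ r : R, op r • m = 0 → r = 0)
    (m : M) (hm : m ≠ 0) :
    PrimeSub (Submodule.span Rᵐᵒᵖ ({m} : Set M)) ↔
      AlmostPrime (Submodule.span Rᵐᵒᵖ ({m} : Set M)) := by
  refine ⟨PrimeSub.almostPrime, fun h => ⟨h.1, fun Y I hYI => ?_⟩⟩
  set X := span Rᵐᵒᵖ ({m} : Set M)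
  by_cases hXI : (sProd (X : Set M) (I : Set R) : Set M) ⊆
      sProd (X : Set M) (colR (X : Set M) Set.univ : Set R)
  · have hcol : colR (X : Set M) Set.univ = (colTI X ⊤ : Set R) :=
      Set.ext fun _ => (TwoSidedIdeal.mem_mk' _ _ _ _ _ _ _).symm
    rw [hcol] at hXI ⊢
    exact Or.inr (le_of_sProd_span_singleton_le (htf m hm) hXI)
  · exact h.of_not_sProd_subset hXI hYI
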